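/- arXiv:1702.05677 — 4 statements merged into one kernel-verified Lean document; each statement's English description precedes it below -/
import Mathlib

section
/- (Sauer–Shelah) Let C ⊆ {0,1}^n have VC dimension d. Then for any A ⊆ [n] with |A| > d, the number of distinct projections |{c|_A : c ∈ C}| is at most Σ_{k=0}^{d} binom(|A|, k), which is at most (e|A|/d)^d. -/
/-!
Encode each pattern on `A` by the subset of `A` where it is `true`. A set shattered by the
resulting family of subsets of `A` is shattered by `C`, so the family has VC dimension at most
`VCD C`, and Mathlib's Sauer–Shelah lemma bounds its size by `∑_{k ≤ d} (|A| choose k)`. For the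
exponential bound put `x = d / |A| ≤ 1`: then
`x ^ d * ∑_{k ≤ d} (|A| choose k) ≤ ∑_{k ≤ d} (|A| choose k) x ^ k ≤ (1 + x) ^ |A| ≤ exp d`.
-/

open Finset

def IsTeachingSet {n : ℕ} (C : Finset (Fin n → Bool)) (c : Fin n → Bool)
    (A : Finset (Fin n)) : Prop :=
  ∀ c' ∈ C, c' ≠ c → ∃ i ∈ A, c' i ≠ c i

noncomputable def TD {n : ℕ} (C : Finset (Fin n → Bool)) (c : Fin n → Bool) : ℕ :=
  sInf {k | ∃ A : Finset (Fin n), A.card = k ∧ IsTeachingSet C c A}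

noncomputable def TDmin {n : ℕ} (C : Finset (Fin n → Bool)) : ℕ :=
  sInf {k | ∃ c ∈ C, TD C c = k}

noncomputable def patterns {n : ℕ} (C : Finset (Fin n → Bool)) (A : Finset (Fin n)) :
    Finset (A → Bool) :=
  @Finset.image _ _ (Classical.decEq _) (fun c (i : A) => c i.1) C

def IsXYClass {n : ℕ} (C : Finset (Fin n → Bool)) (a b : ℕ) : Prop :=
  ∀ A : Finset (Fin n), A.card ≤ a → (patterns C A).card ≤ b

def Shatters {n : ℕ} (C : Finset (Fin n → Bool)) (A : Finset (Fin n)) : Prop :=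
  ∀ f : A → Bool, ∃ c ∈ C, ∀ i : A, c i.1 = f i

noncomputable def VCD {n : ℕ} (C : Finset (Fin n → Bool)) : ℕ :=
  sSup {k | ∃ A : Finset (Fin n), A.card = k ∧ Shatters C A}

noncomputable def eraseMin {n : ℕ} (C : Finset (Fin n → Bool)) : Finset (Fin n → Bool) :=
  @Finset.filter _ (fun c => TD C c ≠ TDmin C) (Classical.decPred _) C

noncomputable def RTD {n : ℕ} (C : Finset (Fin n → Bool)) : ℕ :=
  sSup (Set.range fun t => TDmin (eraseMin^[t] C))

noncomputable def fDim (a b : ℕ) : ℕ∞ :=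
  sSup {m : ℕ∞ | ∃ (n : ℕ) (C : Finset (Fin n → Bool)),
    C.Nonempty ∧ IsXYClass C a b ∧ (TDmin C : ℕ∞) = m}

noncomputable def consistClass {n : ℕ} (C : Finset (Fin n → Bool)) (Y : Finset (Fin n))
    (b : Fin n → Bool) : Finset (Fin n → Bool) :=
  @Finset.filter _ (fun c => ∀ i ∈ Y, c i = b i) (Classical.decPred _) C

noncomputable def prodClass {n1 n2 : ℕ} (C1 : Finset (Fin n1 → Bool))
    (C2 : Finset (Fin n2 → Bool)) : Finset (Fin (n1 + n2) → Bool) :=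
  @Finset.filter _
    (fun c => (fun i => c (Fin.castAdd n2 i)) ∈ C1 ∧ (fun j => c (Fin.natAdd n1 j)) ∈ C2)
    (Classical.decPred _) Finset.univ

lemma le_VCD_of_shatters {n : ℕ} {C : Finset (Fin n → Bool)} {B : Finset (Fin n)}
    (h : Shatters C B) : #B ≤ VCD C :=
  le_csSup ⟨n, by rintro k ⟨B', rfl, -⟩; simpa using B'.card_le_univ⟩ ⟨B, rfl, h⟩

def trueSet {α : Type*} [Fintype α] (f : α → Bool) : Finset α := {i | f i = true}

lemma mem_trueSet {α : Type*} [Fintype α] {f : α → Bool} {i : α} :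
    i ∈ trueSet f ↔ f i = true := by
  simp [trueSet]

lemma trueSet_injective {α : Type*} [Fintype α] : Function.Injective (trueSet (α := α)) :=
  fun f g hfg => funext fun i => Bool.eq_iff_iff.2 <| by rw [← mem_trueSet, hfg, mem_trueSet]

section TraceFamily

variable {n : ℕ} (C : Finset (Fin n → Bool)) (A : Finset (Fin n))

noncomputable def traceFamily : Finset (Finset A) := (patterns C A).image trueSet

lemma card_traceFamily : #(traceFamily C A) = #(patterns C A) :=
  card_image_of_injective _ trueSet_injective

variable {C A}

lemma mem_traceFamily {u : Finset A} :
    u ∈ traceFamily C A ↔ ∃ c ∈ C, trueSet (fun i : A => c i) = u := by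
  simp [traceFamily, patterns]

lemma shatters_map_subtype_of_shatters_traceFamily {s : Finset A}
    (h : (traceFamily C A).Shatters s) : Shatters C (s.map (Function.Embedding.subtype _)) := by
  intro f
  let g : A → Bool := fun j =>
    if hj : j.1 ∈ s.map (Function.Embedding.subtype _) then f ⟨j.1, hj⟩ else false
  obtain ⟨u, hu, hsu⟩ := h (inter_subset_left : s ∩ trueSet g ⊆ s)
  obtain ⟨c, hc, rfl⟩ := mem_traceFamily.1 hu
  refine ⟨c, hc, fun ⟨i, hi⟩ => ?_⟩
  obtain ⟨j, hj, rfl⟩ := mem_map.1 hi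
  have hmem : j ∈ s ∩ trueSet (fun i : A => c i) ↔ j ∈ s ∩ trueSet g := by rw [hsu]
  have hgj : g j = f ⟨j, hi⟩ := dif_pos hi
  rw [mem_inter, mem_inter, mem_trueSet, mem_trueSet, hgj] at hmem
  exact Bool.eq_iff_iff.2 (and_congr_right_iff.1 hmem hj)

lemma vcDim_traceFamily_le : (traceFamily C A).vcDim ≤ VCD C :=
  Finset.sup_le fun s hs => by
    simpa using le_VCD_of_shatters
      (shatters_map_subtype_of_shatters_traceFamily (mem_shatterer.1 hs))

theorem card_patterns_le_sum_choose :
    #(patterns C A) ≤ ∑ k ∈ range (VCD C + 1), (#A).choose k := by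
  calc #(patterns C A) = #(traceFamily C A) := (card_traceFamily C A).symm
    _ ≤ #(traceFamily C A).shatterer := card_le_card_shatterer _
    _ ≤ ∑ k ∈ Iic (traceFamily C A).vcDim, (Fintype.card A).choose k :=
      card_shatterer_le_sum_vcDim
    _ ≤ ∑ k ∈ range (VCD C + 1), (#A).choose k := by
      rw [Fintype.card_coe]
      exact sum_le_sum_of_subset fun k hk =>
        mem_range.2 (Nat.lt_succ_of_le ((mem_Iic.1 hk).trans vcDim_traceFamily_le))

end TraceFamily

lemma sum_range_choose_mul_pow_le_exp {d m : ℕ} (h : d ≤ m) {x : ℝ} (hx : 0 ≤ x) :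
    ∑ k ∈ range (d + 1), (m.choose k : ℝ) * x ^ k ≤ Real.exp (m * x) :=
  calc ∑ k ∈ range (d + 1), (m.choose k : ℝ) * x ^ k
      ≤ ∑ k ∈ range (m + 1), (m.choose k : ℝ) * x ^ k :=
        sum_le_sum_of_subset_of_nonneg (range_subset_range.2 (by omega)) fun _ _ _ => by positivity
    _ = (1 + x) ^ m := by
      rw [add_comm (1 : ℝ) x, add_pow]; simp only [one_pow, mul_one, mul_comm]
    _ ≤ Real.exp x ^ m := by gcongr; linarith [Real.add_one_le_exp x]
    _ = Real.exp (m * x) := (Real.exp_nat_mul x m).symm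

lemma sum_range_choose_le_exp_mul_div_pow {d m : ℕ} (h : d ≤ m) :
    ((∑ k ∈ range (d + 1), m.choose k : ℕ) : ℝ) ≤ (Real.exp 1 * m / d) ^ d := by
  rcases d.eq_zero_or_pos with rfl | hd
  · simp
  have hm : (0 : ℝ) < m := by exact_mod_cast hd.trans_le h
  set x : ℝ := d / m with hx
  have hx0 : 0 < x := by positivity
  have hx1 : x ≤ 1 := div_le_one_of_le₀ (by exact_mod_cast h) hm.le
  have key : ((∑ k ∈ range (d + 1), m.choose k : ℕ) : ℝ) * x ^ d ≤ Real.exp d :=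
    calc ((∑ k ∈ range (d + 1), m.choose k : ℕ) : ℝ) * x ^ d
        ≤ ∑ k ∈ range (d + 1), (m.choose k : ℝ) * x ^ k := by
          push_cast
          rw [sum_mul]
          refine sum_le_sum fun k hk => mul_le_mul_of_nonneg_left ?_ (by positivity)
          exact pow_le_pow_of_le_one hx0.le hx1 (Nat.lt_succ_iff.1 (mem_range.1 hk))
      _ ≤ Real.exp (m * x) := sum_range_choose_mul_pow_le_exp h hx0.le
      _ = Real.exp d := by rw [hx, mul_div_cancel₀ _ hm.ne']
  calc _ ≤ Real.exp d / x ^ d := (le_div_iff₀ (by positivity)).2 key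
    _ = (Real.exp 1 * m / d) ^ d := by
      rw [hx, ← Real.exp_one_pow, div_pow, div_pow, mul_pow, div_div_eq_mul_div]

theorem stmt8 (n : ℕ) (C : Finset (Fin n → Bool)) (d : ℕ) (hd : VCD C = d)
    (A : Finset (Fin n)) (hA : d < A.card) :
    (patterns C A).card ≤ ∑ k ∈ Finset.range (d + 1), (A.card).choose k ∧
    ((∑ k ∈ Finset.range (d + 1), (A.card).choose k : ℕ) : ℝ)
      ≤ (Real.exp 1 * (A.card : ℝ) / (d : ℝ)) ^ d := by
  subst hd
  exact ⟨card_patterns_le_sum_choose, sum_range_choose_le_exp_mul_div_pow hA.le⟩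
end

section
/- Every finite nonempty (3,5)-class C ⊆ {0,1}^n satisfies TD_min(C) ≤ 2; i.e., f(3,5) ≤ 2. -/
open Finset

/-!
Take a nonempty proper slice `D = {c ∈ C | c i = v}` of minimum size. By minimality, whenever
`C \ D` is constant on a coordinate, so is `D`. If `D` shattered a pair `{j, k}`, it would use four
of the at most five patterns of `C` on `{i, j, k}`, leaving a single pattern for `C \ D`; then
`C \ D`, hence `D`, would be constant on `j`, which is absurd. The same minimality argument run
inside `D`, which shatters no pair, shows that a minimum slice of `D` at some coordinate `m` is
a singleton `{c}`, and `{i, m}` is a teaching set for `c` in `C`.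
-/

section

variable {n : ℕ}

def sliceAt (C : Finset (Fin n → Bool)) (i : Fin n) (v : Bool) : Finset (Fin n → Bool) :=
  C.filter fun c => c i = v

@[simp]
lemma mem_sliceAt {C : Finset (Fin n → Bool)} {i : Fin n} {v : Bool} {c : Fin n → Bool} :
    c ∈ sliceAt C i v ↔ c ∈ C ∧ c i = v :=
  mem_filter

lemma sliceAt_subset (C : Finset (Fin n → Bool)) (i : Fin n) (v : Bool) : sliceAt C i v ⊆ C :=
  filter_subset _ _

def ShattersPair (C : Finset (Fin n → Bool)) (j k : Fin n) : Prop :=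
  ∀ a b : Bool, ∃ c ∈ C, c j = a ∧ c k = b

lemma exists_mem_eq_of_not_const {S : Finset (Fin n → Bool)} {j : Fin n}
    (h : ¬ ∃ w, ∀ c ∈ S, c j = w) (b : Bool) : ∃ c ∈ S, c j = b := by
  by_contra! h'
  exact h ⟨!b, fun c hc => Bool.eq_not_of_ne (h' c hc)⟩

lemma ShattersPair.not_const {C : Finset (Fin n → Bool)} {j k : Fin n}
    (h : ShattersPair C j k) : ¬ ∃ w, ∀ c ∈ C, c j = w := by
  rintro ⟨w, hw⟩
  obtain ⟨c, hc, hcj, -⟩ := h (!w) false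
  simp [hw c hc] at hcj

lemma IsTeachingSet.insert_of_sliceAt {C : Finset (Fin n → Bool)} {c : Fin n → Bool} {i : Fin n}
    {A : Finset (Fin n)} (h : IsTeachingSet (sliceAt C i (c i)) c A) :
    IsTeachingSet C c (insert i A) := by
  intro c' hc' hne
  by_cases hi : c' i = c i
  · obtain ⟨j, hj, hcj⟩ := h c' (mem_sliceAt.2 ⟨hc', hi⟩) hne
    exact ⟨j, mem_insert_of_mem hj, hcj⟩
  · exact ⟨i, mem_insert_self i A, hi⟩

lemma isTeachingSet_empty_of_card_le_one {C : Finset (Fin n → Bool)} {c : Fin n → Bool}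
    (hc : c ∈ C) (hC : C.card ≤ 1) : IsTeachingSet C c ∅ :=
  fun c' hc' hne => absurd (card_le_one.1 hC c' hc' c hc) hne

structure IsMinSlice (C : Finset (Fin n → Bool)) (i : Fin n) (v : Bool) : Prop where
  nonempty : (sliceAt C i v).Nonempty
  ne : sliceAt C i v ≠ C
  card_le : ∀ j u, (sliceAt C j u).Nonempty → sliceAt C j u ≠ C →
    (sliceAt C i v).card ≤ (sliceAt C j u).card

lemma exists_isMinSlice {C : Finset (Fin n → Bool)} (hC : 1 < C.card) :
    ∃ i v, IsMinSlice C i v := by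
  obtain ⟨c, hc, c', hc', hne⟩ := one_lt_card.1 hC
  obtain ⟨i₀, hi₀⟩ := Function.ne_iff.1 hne
  let proper := univ.filter fun p : Fin n × Bool =>
    (sliceAt C p.1 p.2).Nonempty ∧ sliceAt C p.1 p.2 ≠ C
  have hproper : (i₀, c i₀) ∈ proper := by
    refine mem_filter.2 ⟨mem_univ _, ⟨c, mem_sliceAt.2 ⟨hc, rfl⟩⟩, fun h => hi₀ ?_⟩
    exact ((mem_sliceAt.1 (h ▸ hc')).2).symm
  obtain ⟨⟨i, v⟩, hp, hmin⟩ := exists_min_image proper (fun p => (sliceAt C p.1 p.2).card)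
    ⟨_, hproper⟩
  obtain ⟨-, hne, hproper⟩ := mem_filter.1 hp
  exact ⟨i, v, hne, hproper, fun j u hj hju => hmin (j, u) (mem_filter.2 ⟨mem_univ _, hj, hju⟩)⟩

lemma IsMinSlice.nonempty_compl {C : Finset (Fin n → Bool)} {i : Fin n} {v : Bool}
    (hmin : IsMinSlice C i v) : (sliceAt C i (!v)).Nonempty := by
  by_contra! h
  refine hmin.ne (Subset.antisymm (sliceAt_subset C i v) fun c hc => mem_sliceAt.2 ⟨hc, ?_⟩)
  by_contra hcv
  simpa [h] using (mem_sliceAt.2 ⟨hc, Bool.eq_not_of_ne hcv⟩ : c ∈ sliceAt C i (!v))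

/-- Otherwise the slice of `C` at `j` avoiding the constant value of the complement would be a
proper slice strictly inside `sliceAt C i v`. -/
lemma IsMinSlice.const_of_const_compl {C : Finset (Fin n → Bool)} {i j : Fin n} {v : Bool}
    (hmin : IsMinSlice C i v) (hcompl : ∃ u, ∀ c ∈ sliceAt C i (!v), c j = u) :
    ∃ w, ∀ c ∈ sliceAt C i v, c j = w := by
  obtain ⟨u, hu⟩ := hcompl
  obtain ⟨e, he⟩ := hmin.nonempty_compl
  have hsub : sliceAt C j (!u) ⊆ sliceAt C i v := by
    intro c hc
    obtain ⟨hcC, hcj⟩ := mem_sliceAt.1 hc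
    refine mem_sliceAt.2 ⟨hcC, ?_⟩
    by_contra hci
    simpa [hcj] using hu c (mem_sliceAt.2 ⟨hcC, Bool.eq_not_of_ne hci⟩)
  rcases (sliceAt C j (!u)).eq_empty_or_nonempty with hS | hS
  · refine ⟨u, fun c hc => ?_⟩
    by_contra hcj
    have hcS : c ∈ sliceAt C j (!u) := mem_sliceAt.2 ⟨(mem_sliceAt.1 hc).1, Bool.eq_not_of_ne hcj⟩
    simp [hS] at hcS
  · have hne : sliceAt C j (!u) ≠ C := fun h => by
      have heS : e ∈ sliceAt C j (!u) := by rw [h]; exact (mem_sliceAt.1 he).1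
      simpa [hu e he] using (mem_sliceAt.1 heS).2
    have heq := eq_of_subset_of_card_le hsub (hmin.card_le j (!u) hS hne)
    exact ⟨!u, fun c hc => (mem_sliceAt.1 (heq ▸ hc)).2⟩

lemma IsMinSlice.shattersPair {C : Finset (Fin n → Bool)} {i k : Fin n} {v : Bool}
    (hmin : IsMinSlice C i v) (hk : ¬ ∃ w, ∀ c ∈ sliceAt C i v, c k = w) : ShattersPair C i k := by
  intro a b
  have ha : ¬ ∃ w, ∀ c ∈ sliceAt C i a, c k = w := by
    obtain rfl | rfl := Bool.eq_or_eq_not a v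
    exacts [hk, mt hmin.const_of_const_compl hk]
  obtain ⟨c, hc, hcb⟩ := exists_mem_eq_of_not_const ha b
  exact ⟨c, (mem_sliceAt.1 hc).1, (mem_sliceAt.1 hc).2, hcb⟩

lemma exists_isTeachingSet_card_le_one {C : Finset (Fin n → Bool)} (hC : C.Nonempty)
    (hshat : ∀ j k, ¬ ShattersPair C j k) :
    ∃ c ∈ C, ∃ A : Finset (Fin n), A.card ≤ 1 ∧ IsTeachingSet C c A := by
  rcases le_or_gt C.card 1 with h1 | h1
  · obtain ⟨c, hc⟩ := hC
    exact ⟨c, hc, ∅, by simp, isTeachingSet_empty_of_card_le_one hc h1⟩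
  obtain ⟨i, v, hmin⟩ := exists_isMinSlice h1
  have hsingle : (sliceAt C i v).card ≤ 1 := by
    refine card_le_one.2 fun c hc c' hc' => funext fun k => ?_
    by_contra hk
    exact hshat i k (hmin.shattersPair fun ⟨w, hw⟩ => hk ((hw c hc).trans (hw c' hc').symm))
  obtain ⟨c, hc⟩ := hmin.nonempty
  obtain ⟨hcC, rfl⟩ := mem_sliceAt.1 hc
  refine ⟨c, hcC, {i}, by simp, ?_⟩
  simpa using (isTeachingSet_empty_of_card_le_one hc hsingle).insert_of_sliceAt

lemma card_image_triple_le {C : Finset (Fin n → Bool)} (i j k : Fin n) :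
    (C.image fun c => (c i, c j, c k)).card ≤ (patterns C {i, j, k}).card := by
  classical
  have himage : C.image (fun c => (c i, c j, c k)) = (patterns C {i, j, k}).image
      fun p => (p ⟨i, by simp⟩, p ⟨j, by simp⟩, p ⟨k, by simp⟩) := by
    ext x
    simp [patterns]
  rw [himage]
  exact card_image_le

/-- The shattering slice takes up four of the at most five patterns on `{i, j, k}`. -/
lemma const_compl_of_shattersPair_sliceAt {C : Finset (Fin n → Bool)} {i j k : Fin n} {v : Bool}
    (hclass : IsXYClass C 3 5) (hshat : ShattersPair (sliceAt C i v) j k) :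
    ∃ u, ∀ c ∈ sliceAt C i (!v), c j = u := by
  set T := C.image fun c => (c i, c j, c k)
  have hT : T.card ≤ 5 := (card_image_triple_le i j k).trans (hclass _ card_le_three)
  have hfour : ({v} ×ˢ univ : Finset (Bool × Bool × Bool)) ⊆ T.filter (·.1 = v) := by
    rintro ⟨a, b, b'⟩ hx
    obtain ⟨rfl, -⟩ := by simpa using hx
    obtain ⟨c, hc, hcj, hck⟩ := hshat b b'
    obtain ⟨hcC, hci⟩ := mem_sliceAt.1 hc
    exact mem_filter.2 ⟨mem_image.2 ⟨c, hcC, by rw [hci, hcj, hck]⟩, rfl⟩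
  have hrest : (T.filter (¬ ·.1 = v)).card ≤ 1 := by
    have hcard : ({v} ×ˢ univ : Finset (Bool × Bool × Bool)).card = 4 := by simp
    have := card_le_card hfour
    have := T.card_filter_add_card_filter_not (·.1 = v)
    omega
  rcases (sliceAt C i (!v)).eq_empty_or_nonempty with h | ⟨e, he⟩
  · exact ⟨false, by simp [h]⟩
  refine ⟨e j, fun c hc => ?_⟩
  have hmem : ∀ d ∈ sliceAt C i (!v), (d i, d j, d k) ∈ T.filter (¬ ·.1 = v) := fun d hd => by
    obtain ⟨hdC, hdi⟩ := mem_sliceAt.1 hd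
    exact mem_filter.2 ⟨mem_image.2 ⟨d, hdC, rfl⟩, by simp [hdi]⟩
  exact congrArg (fun x => x.2.1) (card_le_one.1 hrest _ (hmem c hc) _ (hmem e he))

lemma IsMinSlice.not_shattersPair {C : Finset (Fin n → Bool)} {i : Fin n} {v : Bool}
    (hclass : IsXYClass C 3 5) (hmin : IsMinSlice C i v) (j k : Fin n) :
    ¬ ShattersPair (sliceAt C i v) j k := fun hshat =>
  hshat.not_const (hmin.const_of_const_compl (const_compl_of_shattersPair_sliceAt hclass hshat))

lemma exists_isTeachingSet_card_le_two {C : Finset (Fin n → Bool)} (hC : C.Nonempty)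
    (hclass : IsXYClass C 3 5) :
    ∃ c ∈ C, ∃ A : Finset (Fin n), A.card ≤ 2 ∧ IsTeachingSet C c A := by
  rcases le_or_gt C.card 1 with h1 | h1
  · obtain ⟨c, hc⟩ := hC
    exact ⟨c, hc, ∅, by simp, isTeachingSet_empty_of_card_le_one hc h1⟩
  obtain ⟨i, v, hmin⟩ := exists_isMinSlice h1
  obtain ⟨c, hc, A, hA, hteach⟩ :=
    exists_isTeachingSet_card_le_one hmin.nonempty (hmin.not_shattersPair hclass)
  obtain ⟨hcC, rfl⟩ := mem_sliceAt.1 hc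
  exact ⟨c, hcC, insert i A, (card_insert_le i A).trans (by omega), hteach.insert_of_sliceAt⟩

lemma TDmin_le_card {C : Finset (Fin n → Bool)} {c : Fin n → Bool} {A : Finset (Fin n)}
    (hc : c ∈ C) (hA : IsTeachingSet C c A) : TDmin C ≤ A.card :=
  calc TDmin C ≤ TD C c := Nat.sInf_le ⟨c, hc, rfl⟩
    _ ≤ A.card := Nat.sInf_le ⟨A, rfl, hA⟩

end

theorem stmt12 (n : ℕ) (C : Finset (Fin n → Bool)) (hC : C.Nonempty)
    (hclass : IsXYClass C 3 5) :
    TDmin C ≤ 2 := by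
  obtain ⟨c, hc, A, hA, hteach⟩ := exists_isTeachingSet_card_le_two hC hclass
  exact (TDmin_le_card hc hteach).trans hA
end

section
/- (Kuhlmann) Every finite nonempty (2,3)-class C ⊆ {0,1}^n satisfies TD_min(C) ≤ 1; i.e., f(2,3) ≤ 1. Equivalently, if no 2-element subset of [n] realizes all 4 patterns under C and moreover every 2-element subset realizes at most 3 patterns, then some concept in C is distinguished from all others by a single instance. -/
open Finset

/-! Among the half-classes `{c ∈ C | c i = v}` that are proper and nonempty, take one, `H`, of
minimal size. If `H` had two members, they would differ at some `j ≠ i`; since `{i, j}` is not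
shattered, all concepts outside `H` then agree at `j`, so the concepts taking the other value
at `j` form a strictly smaller proper nonempty half-class. Hence `H = {c}`, and `{i}` teaches `c`. -/

lemma Bool.eq_or_eq_of_ne {x y : Bool} (h : x ≠ y) (b : Bool) : b = x ∨ b = y := by
  revert x y b; decide

namespace XYClass

variable {n : ℕ} {C : Finset (Fin n → Bool)}

lemma tdMin_le_card_of_isTeachingSet {c : Fin n → Bool} {A : Finset (Fin n)} (hc : c ∈ C)
    (hA : IsTeachingSet C c A) : TDmin C ≤ A.card :=
  calc TDmin C ≤ TD C c := Nat.sInf_le ⟨c, hc, rfl⟩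
    _ ≤ A.card := Nat.sInf_le ⟨A, rfl, hA⟩

lemma isTeachingSet_singleton_empty (c : Fin n → Bool) : IsTeachingSet {c} c ∅ :=
  fun _ hc' hne => absurd (mem_singleton.mp hc') hne

lemma isTeachingSet_of_filter_eq_singleton {c : Fin n → Bool} {i : Fin n}
    (h : C.filter (· i = c i) = {c}) : IsTeachingSet C c {i} := by
  intro c' hc' hne
  refine ⟨i, mem_singleton_self i, fun hi => hne ?_⟩
  have hmem : c' ∈ C.filter (· i = c i) := mem_filter.mpr ⟨hc', hi⟩
  rwa [h, mem_singleton] at hmem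

lemma not_shatters_of_isXYClass {a b : ℕ} {A : Finset (Fin n)} (hclass : IsXYClass C a b)
    (hA : A.card ≤ a) (hb : b < 2 ^ A.card) : ¬ Shatters C A := by
  intro hsh
  have huniv : patterns C A = univ := by
    refine eq_univ_of_forall fun f => ?_
    obtain ⟨c, hc, hcf⟩ := hsh f
    exact (@mem_image _ _ (Classical.decEq _) _ _ _).mpr ⟨c, hc, funext hcf⟩
  have hcard : (patterns C A).card = 2 ^ A.card := by
    rw [huniv, card_univ, Fintype.card_fun, Fintype.card_coe, Fintype.card_bool]
  exact absurd (hclass A hA) (by omega)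

lemma shatters_pair {i j : Fin n} (hij : i ≠ j)
    (h : ∀ a b : Bool, ∃ c ∈ C, c i = a ∧ c j = b) : Shatters C {i, j} := by
  intro f
  obtain ⟨c, hc, hci, hcj⟩ := h (f ⟨i, by simp⟩) (f ⟨j, by simp⟩)
  refine ⟨c, hc, fun ⟨k, hk⟩ => ?_⟩
  rcases mem_insert.mp hk with rfl | hk
  · exact hci
  · obtain rfl := mem_singleton.mp hk
    exact hcj

/-- Such concepts would realize all four patterns on `{i, j}`. -/
lemma false_of_split_pairs (hclass : IsXYClass C 2 3) {i j : Fin n} (hij : i ≠ j)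
    {d d' e e' : Fin n → Bool} (hd : d ∈ C) (hd' : d' ∈ C) (he : e ∈ C) (he' : e' ∈ C)
    (hdi : d' i = d i) (hdj : d j ≠ d' j) (hei : e' i = e i) (hej : e j ≠ e' j)
    (hde : d i ≠ e i) : False := by
  refine not_shatters_of_isXYClass hclass card_le_two (by simp [card_pair hij]) <|
    shatters_pair hij fun a b => ?_
  rcases Bool.eq_or_eq_of_ne hde a with rfl | rfl
  · rcases Bool.eq_or_eq_of_ne hdj b with rfl | rfl
    exacts [⟨d, hd, rfl, rfl⟩, ⟨d', hd', hdi, rfl⟩]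
  · rcases Bool.eq_or_eq_of_ne hej b with rfl | rfl
    exacts [⟨e, he, rfl, rfl⟩, ⟨e', he', hei, rfl⟩]

lemma exists_filter_nonempty_ssubset (hclass : IsXYClass C 2 3) {i : Fin n} {v : Bool}
    (hcard : 1 < (C.filter (· i = v)).card) {e : Fin n → Bool} (he : e ∈ C) (hei : e i ≠ v) :
    ∃ j w, (C.filter (· j = w)).Nonempty ∧ C.filter (· j = w) ⊂ C.filter (· i = v) := by
  obtain ⟨d, hd, d', hd', hdd'⟩ := one_lt_card.mp hcard
  obtain ⟨j, hdj⟩ := Function.ne_iff.mp hdd'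
  simp only [mem_filter] at hd hd'
  have hij : i ≠ j := by rintro rfl; exact hdj (hd.2.trans hd'.2.symm)
  have houtside : ∀ e' ∈ C, e' i ≠ v → e' j = e j := fun e' he' he'i => by_contra fun hej =>
    false_of_split_pairs hclass hij hd.1 hd'.1 he he' (hd'.2.trans hd.2.symm) hdj
      (Bool.eq_or_eq_of_ne hei (e' i) |>.resolve_right he'i) (Ne.symm hej) (hd.2 ▸ Ne.symm hei)
  suffices key : ∀ x y : Fin n → Bool, x ∈ C ∧ x i = v → y ∈ C ∧ y i = v → x j ≠ y j →
      y j ≠ e j → ∃ j w, (C.filter (· j = w)).Nonempty ∧ C.filter (· j = w) ⊂ C.filter (· i = v) by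
    by_cases hde : d j = e j
    · exact key d d' hd hd' hdj (hde ▸ Ne.symm hdj)
    · exact key d' d hd' hd (Ne.symm hdj) hde
  intro x y hx hy hxy hye
  have hsub : C.filter (· j = y j) ⊆ C.filter (· i = v) := by
    intro c hc
    rw [mem_filter] at hc ⊢
    exact ⟨hc.1, by_contra fun hci => hye (hc.2 ▸ houtside c hc.1 hci)⟩
  refine ⟨j, y j, ⟨y, mem_filter.mpr ⟨hy.1, rfl⟩⟩, (ssubset_iff_of_subset hsub).mpr ?_⟩
  exact ⟨x, mem_filter.mpr hx, fun hx' => hxy (mem_filter.mp hx').2⟩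

lemma exists_filter_eq_singleton_of_nonempty (hclass : IsXYClass C 2 3) {i : Fin n} {v : Bool}
    (hne : (C.filter (· i = v)).Nonempty) {e : Fin n → Bool} (he : e ∈ C) (hei : e i ≠ v) :
    ∃ c ∈ C, ∃ j, C.filter (· j = c j) = {c} := by
  induction hm : (C.filter (· i = v)).card using Nat.strong_induction_on generalizing i v e
    with | _ m ih
  rcases Nat.lt_or_ge 1 m with hlt | hle
  · obtain ⟨j, w, hne', hss⟩ := exists_filter_nonempty_ssubset hclass (hm ▸ hlt) he hei
    obtain ⟨x, hx, hxw⟩ := exists_of_ssubset hss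
    exact ih _ (hm ▸ card_lt_card hss) hne' (mem_filter.mp hx).1
      (fun h => hxw (mem_filter.mpr ⟨(mem_filter.mp hx).1, h⟩)) rfl
  · obtain ⟨c, hc⟩ := card_eq_one.mp (hm.trans (le_antisymm hle (hm ▸ hne.card_pos)))
    have hcv : c ∈ C.filter (· i = v) := hc ▸ mem_singleton_self c
    rw [mem_filter] at hcv
    exact ⟨c, hcv.1, i, hcv.2 ▸ hc⟩

lemma exists_filter_eq_singleton (hclass : IsXYClass C 2 3) (hC : 1 < C.card) :
    ∃ c ∈ C, ∃ j, C.filter (· j = c j) = {c} := by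
  obtain ⟨d, hd, e, he, hde⟩ := one_lt_card.mp hC
  obtain ⟨i, hi⟩ := Function.ne_iff.mp hde
  exact exists_filter_eq_singleton_of_nonempty hclass ⟨d, mem_filter.mpr ⟨hd, rfl⟩⟩ he (Ne.symm hi)

end XYClass

open XYClass in
theorem stmt14 (n : ℕ) (C : Finset (Fin n → Bool)) (hC : C.Nonempty)
    (hclass : IsXYClass C 2 3) :
    TDmin C ≤ 1 := by
  rcases Nat.lt_or_ge 1 C.card with hlt | hle
  · obtain ⟨c, hc, i, hci⟩ := exists_filter_eq_singleton hclass hlt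
    exact (tdMin_le_card_of_isTeachingSet hc (isTeachingSet_of_filter_eq_singleton hci)).trans
      (card_singleton i).le
  · obtain ⟨c, rfl⟩ := card_eq_one.mp (le_antisymm hle hC.card_pos)
    exact (tdMin_le_card_of_isTeachingSet (mem_singleton_self c)
      (isTeachingSet_singleton_empty c)).trans zero_le_one
end

section
/- If C is a finite class of VC dimension 1 (i.e., a (2,3)-class for all pairs and no pair shattered), then RTD(C) ≤ 1. -/
open Finset

/-!
Every subclass of `C` again shatters no pair, so it suffices that such a class `D` has a concept
with a teaching set of size one. Among the nonempty fibres `{c ∈ D | c i = v}` take a minimal one.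
If it held two concepts, they would differ at some `j ≠ i`, and the pattern on `{i, j}` missing
from `D` would carve out a strictly smaller nonempty fibre at `j`. So the minimal fibre is a
singleton `{c}`, and `{i}` teaches `c`.
-/

lemma Bool.eq_of_ne_of_ne {x y z : Bool} (hx : x ≠ z) (hy : y ≠ z) : x = y := by
  decide +revert

variable {n : ℕ}

section VCDimension

variable {C D : Finset (Fin n → Bool)} {A : Finset (Fin n)}

lemma Shatters.mono (h : Shatters D A) (hDC : D ⊆ C) : Shatters C A := fun f =>
  let ⟨c, hc, hcf⟩ := h f
  ⟨c, hDC hc, hcf⟩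

lemma Shatters.card_le_VCD (h : Shatters C A) : A.card ≤ VCD C := by
  refine le_csSup ⟨n, ?_⟩ ⟨A, rfl, h⟩
  rintro k ⟨B, rfl, -⟩
  simpa using B.card_le_univ

lemma exists_missing_pattern_of_not_shatters_pair {i j : Fin n}
    (h : ¬ Shatters D {i, j}) : ∃ u w, ∀ d ∈ D, d i = u → d j ≠ w := by
  contrapose! h
  intro f
  obtain ⟨d, hd, hdi, hdj⟩ := h (f ⟨i, by simp⟩) (f ⟨j, by simp⟩)
  refine ⟨d, hd, fun ⟨x, hx⟩ => ?_⟩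
  rcases mem_insert.mp hx with rfl | hx
  · exact hdi
  · obtain rfl := mem_singleton.mp hx
    exact hdj

end VCDimension

section Fibre

def fibre (D : Finset (Fin n → Bool)) (i : Fin n) (v : Bool) : Finset (Fin n → Bool) :=
  D.filter (· i = v)

variable {D : Finset (Fin n → Bool)} {i j : Fin n} {u v w : Bool} {a b c : Fin n → Bool}

@[simp]
lemma mem_fibre : c ∈ fibre D i v ↔ c ∈ D ∧ c i = v := mem_filter

lemma fibre_ssubset_fibre (hmiss : ∀ d ∈ D, d i = u → d j ≠ w)
    (ha : a ∈ fibre D i v) (haw : a j = w) (hb : b ∈ fibre D i v) (hbw : b j ≠ w) :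
    fibre D j w ⊂ fibre D i v := by
  rw [mem_fibre] at ha hb
  have hvu : v ≠ u := fun hvu => hmiss a ha.1 (ha.2.trans hvu) haw
  refine Finset.ssubset_iff_subset_ne.mpr ⟨fun d hd => ?_, fun heq => hbw ?_⟩
  · rw [mem_fibre] at hd ⊢
    have hdu : d i ≠ u := fun hdu => hmiss d hd.1 hdu hd.2
    exact ⟨hd.1, Bool.eq_of_ne_of_ne hdu hvu⟩
  · have hb' : b ∈ fibre D j w := heq ▸ mem_fibre.mpr hb
    exact (mem_fibre.mp hb').2

lemma exists_fibre_eq_singleton (hD : ∀ i j, i ≠ j → ¬ Shatters D {i, j})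
    (hne : (fibre D i v).Nonempty) : ∃ j w c, fibre D j w = {c} := by
  induction hk : (fibre D i v).card using Nat.strong_induction_on generalizing i v with
  | _ k ih =>
  obtain ⟨c, hc⟩ | ⟨a, ha, b, hb, hab⟩ := hne.exists_eq_singleton_or_nontrivial
  · exact ⟨i, v, c, hc⟩
  obtain ⟨j, hj⟩ := Function.ne_iff.mp hab
  have hij : i ≠ j := by
    rintro rfl
    exact hj ((mem_fibre.mp ha).2.trans (mem_fibre.mp hb).2.symm)
  obtain ⟨u, w, hmiss⟩ := exists_missing_pattern_of_not_shatters_pair (hD i j hij)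
  obtain ⟨a, ha, b, hb, haw, hbw⟩ :
      ∃ a ∈ fibre D i v, ∃ b ∈ fibre D i v, a j = w ∧ b j ≠ w := by
    by_cases haw : a j = w
    · exact ⟨a, ha, b, hb, haw, haw ▸ hj.symm⟩
    · exact ⟨b, hb, a, ha, Bool.eq_of_ne_of_ne hj.symm (Ne.symm haw), haw⟩
  have hlt := fibre_ssubset_fibre hmiss ha haw hb hbw
  exact ih _ (hk ▸ card_lt_card hlt) ⟨a, mem_fibre.mpr ⟨(mem_fibre.mp ha).1, haw⟩⟩ rfl

lemma isTeachingSet_of_fibre_eq_singleton (h : fibre D i v = {c}) :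
    IsTeachingSet D c {i} := by
  have hc : c ∈ fibre D i v := h ▸ mem_singleton_self c
  intro c' hc' hne
  refine ⟨i, mem_singleton_self i, fun heq => hne ?_⟩
  have : c' ∈ fibre D i v := mem_fibre.mpr ⟨hc', heq.trans (mem_fibre.mp hc).2⟩
  exact mem_singleton.mp (h ▸ this)

end Fibre

section TeachingDimension

variable {C D : Finset (Fin n → Bool)} {c : Fin n → Bool}

lemma TDmin_le_TD (hc : c ∈ C) : TDmin C ≤ TD C c := Nat.sInf_le ⟨c, hc, rfl⟩

lemma TD_le_card {A : Finset (Fin n)} (h : IsTeachingSet C c A) : TD C c ≤ A.card :=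
  Nat.sInf_le ⟨A, rfl, h⟩

lemma TDmin_empty : TDmin (∅ : Finset (Fin n → Bool)) = 0 := by
  simp [TDmin]

lemma TDmin_le_one_of_not_shatters_pair (hD : ∀ i j, i ≠ j → ¬ Shatters D {i, j}) :
    TDmin D ≤ 1 := by
  rcases D.eq_empty_or_nonempty with rfl | hne
  · simp [TDmin_empty]
  obtain ⟨c, rfl⟩ | ⟨a, ha, b, -, hab⟩ := hne.exists_eq_singleton_or_nontrivial
  · have hts : IsTeachingSet {c} c ∅ := fun c' hc' hne => absurd (mem_singleton.mp hc') hne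
    exact (TDmin_le_TD (mem_singleton_self c)).trans ((TD_le_card hts).trans (by simp))
  obtain ⟨j, -⟩ := Function.ne_iff.mp hab
  obtain ⟨i, v, c, hc⟩ :=
    exists_fibre_eq_singleton hD (i := j) (v := a j) ⟨a, mem_fibre.mpr ⟨ha, rfl⟩⟩
  have hcD : c ∈ D := (mem_fibre.mp (hc ▸ mem_singleton_self c)).1
  exact (TDmin_le_TD hcD).trans (TD_le_card (isTeachingSet_of_fibre_eq_singleton hc))

lemma eraseMin_subset : eraseMin C ⊆ C :=
  @filter_subset _ _ (Classical.decPred _) C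

lemma iterate_eraseMin_subset (t : ℕ) : eraseMin^[t] C ⊆ C := by
  induction t with
  | zero => rfl
  | succ t ih =>
    rw [Function.iterate_succ_apply']
    exact eraseMin_subset.trans ih

lemma RTD_le_of_forall_subset {k : ℕ} (h : ∀ D ⊆ C, TDmin D ≤ k) : RTD C ≤ k :=
  csSup_le (Set.range_nonempty _) (by
    rintro _ ⟨t, rfl⟩
    exact h _ (iterate_eraseMin_subset t))

end TeachingDimension

theorem stmt15 (n : ℕ) (C : Finset (Fin n → Bool)) (hC : VCD C ≤ 1) :
    RTD C ≤ 1 := by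
  refine RTD_le_of_forall_subset fun D hDC => TDmin_le_one_of_not_shatters_pair ?_
  intro i j hij hshatters
  have hcard := (hshatters.mono hDC).card_le_VCD
  rw [card_pair hij] at hcard
  omega
end
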